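/- arXiv:1303.4684 — 3 statements merged into one kernel-verified Lean document; each statement's English description precedes it below -/
import Mathlib

section
/- Let S ⊆ ℝ be a Borel set that is not meager. Then S is RAP: for every integer n ≥ 3, S contains an n-term arithmetic progression. -/
open Set

noncomputable section

/-- `A ⊆ ℝ` is *FAP* (free of arithmetic progressions): it contains no 3-term AP. -/
def FAP (A : Set ℝ) : Prop :=
  ¬ ∃ x d : ℝ, 0 < d ∧ x ∈ A ∧ x + d ∈ A ∧ x + 2 * d ∈ A

/-- `A ⊆ ℝ` is *RAP* (rich in arithmetic progressions): it contains APs of every length `n ≥ 3`. -/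
def RAP (A : Set ℝ) : Prop :=
  ∀ n : ℕ, 3 ≤ n → ∃ x d : ℝ, 0 < d ∧ ∀ k : ℕ, k < n → x + (k : ℝ) * d ∈ A

/-- The image in `ℝ` of a set `S ⊆ [0,1]` under a homeomorphism `φ : [0,1] → [0,1]`. -/
def imgH (φ : Set.Icc (0:ℝ) 1 ≃ₜ Set.Icc (0:ℝ) 1) (S : Set ℝ) : Set ℝ :=
  Subtype.val '' (⇑φ '' (Subtype.val ⁻¹' S))

/-!
By the Baire property, a nonmeagre Borel set `S` differs from a nonempty open set `u` by a
meagre set, so `u \ S` is meagre. Pick `d > 0` and a neighbourhood `V` of a point of `u` with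
`x + k d ∈ u` for all `x ∈ V`, `k < n`. The starting points `x` for which some `x + k d` lands in
`u \ S` lie in finitely many translates of a meagre set, which cannot cover the nonmeagre `V`.
-/

open Filter Topology

theorem BaireMeasurableSet.exists_isOpen_nonempty_isMeagre_diff {X : Type*} [TopologicalSpace X]
    {s : Set X} (hs : BaireMeasurableSet s) (hs' : ¬ IsMeagre s) :
    ∃ u : Set X, IsOpen u ∧ u.Nonempty ∧ IsMeagre (u \ s) := by
  obtain ⟨u, hu, hsu⟩ := hs.residualEq_isOpen
  refine ⟨u, hu, nonempty_iff_ne_empty.2 ?_, ?_⟩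
  · rintro rfl
    exact hs' (eventuallyEq_empty.1 hsu)
  · filter_upwards [hsu] with x hx
    exact fun h => h.2 (hx.mpr h.1)

theorem not_isMeagre_of_mem_nhds {X : Type*} [TopologicalSpace X] [BaireSpace X] {s : Set X}
    {x : X} (hs : s ∈ 𝓝 x) : ¬ IsMeagre s := fun h =>
  not_isMeagre_of_isOpen isOpen_interior ⟨x, mem_interior_iff_mem_nhds.2 hs⟩
    (h.mono interior_subset)

theorem exists_mem_forall_apply_mem_of_isMeagre_diff {X Y ι : Type*} [TopologicalSpace X]
    [TopologicalSpace Y] {s U : Set Y} {V : Set X} {I : Set ι} {f : ι → X → Y}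
    (hf : ∀ i ∈ I, Continuous (f i)) (hf' : ∀ i ∈ I, IsOpenMap (f i)) (hI : I.Countable)
    (hUs : IsMeagre (U \ s)) (hV : ¬ IsMeagre V) (hVU : ∀ x ∈ V, ∀ i ∈ I, f i x ∈ U) :
    ∃ x ∈ V, ∀ i ∈ I, f i x ∈ s := by
  have hpre : ∀ᶠ x in residual X, ∀ i ∈ I, f i x ∉ U \ s :=
    (eventually_countable_ball hI).2 fun i hi =>
      (tendsto_residual_of_isOpenMap (hf i hi) (hf' i hi)).eventually hUs
  -- `¬ IsMeagre V` unfolds to `∃ᶠ x in residual X, x ∈ V`.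
  obtain ⟨x, hxV, hx⟩ := (Frequently.and_eventually (p := (· ∈ V)) hV hpre).exists
  exact ⟨x, hxV, fun i hi => by simpa [hVU x hxV i hi] using hx i hi⟩

theorem exists_pos_eventually_forall_add_mul_mem {u : Set ℝ} {x₀ : ℝ} (hu : u ∈ 𝓝 x₀) (n : ℕ) :
    ∃ d : ℝ, 0 < d ∧ ∀ᶠ x in 𝓝 x₀, ∀ k : ℕ, k < n → x + k * d ∈ u := by
  -- Pairs are `(d, x)`, so that currying yields `∀ᶠ d in 𝓝 0, ∀ᶠ x in 𝓝 x₀, _`.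
  have hcont : ∀ᶠ p : ℝ × ℝ in 𝓝 (0, x₀), ∀ k : ℕ, k < n → p.2 + k * p.1 ∈ u := by
    refine (eventually_all_finite (finite_Iio n)).2 fun k _ => ?_
    have : Continuous fun p : ℝ × ℝ => p.2 + k * p.1 := by fun_prop
    exact this.continuousAt.preimage_mem_nhds (by simpa using hu)
  rw [nhds_prod_eq] at hcont
  have hpos : ∀ᶠ d in 𝓝[>] (0 : ℝ), 0 < d := self_mem_nhdsWithin
  obtain ⟨d, hd, hdpos⟩ := ((hcont.curry.filter_mono nhdsWithin_le_nhds).and hpos).exists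
  exact ⟨d, hdpos, hd⟩

/-- A Borel subset of `ℝ` which is not meager is rich in APs. -/
theorem nonmeager_borel_RAP (S : Set ℝ) (hBorel : MeasurableSet S)
    (hmeager : ¬ IsMeagre S) : RAP S := by
  obtain ⟨u, hu, ⟨x₀, hx₀⟩, huS⟩ :=
    hBorel.baireMeasurableSet.exists_isOpen_nonempty_isMeagre_diff hmeager
  intro n _
  obtain ⟨d, hd, hV⟩ := exists_pos_eventually_forall_add_mul_mem (hu.mem_nhds hx₀) n
  obtain ⟨x, -, hx⟩ := exists_mem_forall_apply_mem_of_isMeagre_diff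
    (f := fun (k : ℕ) x => x + k * d) (fun _ _ => continuous_add_const _)
    (fun k _ => (Homeomorph.addRight ((k : ℝ) * d)).isOpenMap)
    (finite_Iio n).countable huS (not_isMeagre_of_mem_nhds hV) (fun _ hx => hx)
  exact ⟨x, d, hd, hx⟩
end
end

section
/- Let C ⊆ [0,1] be a meager subset. Let H⁺ denote the set of increasing homeomorphisms φ : [0,1] → [0,1] (so φ(0)=0, φ(1)=1), regarded as a subspace of the space C([0,1],ℝ) of continuous functions with the supremum metric. Then the set of φ ∈ H⁺ for which φ(C) is FAP is residual in H⁺ (its complement in H⁺ is meager in H⁺). -/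
open Set

noncomputable section

/-- `H⁺`: the strictly increasing homeomorphisms of `[0,1]` onto itself, realized as the
subset of `C([0,1], ℝ)` (carrying the sup-norm topology) consisting of the strictly
increasing continuous functions fixing `0` and `1` (such a map is automatically a
homeomorphism of `[0,1]` onto itself). -/
def Hplus : Set C(Set.Icc (0:ℝ) 1, ℝ) :=
  {f | StrictMono f ∧ f ⟨0, by norm_num⟩ = 0 ∧ f ⟨1, by norm_num⟩ = 1}

/-- The image in `ℝ` of a set `C ⊆ [0,1]` under `f : C([0,1], ℝ)`. -/
def imgC (f : C(Set.Icc (0:ℝ) 1, ℝ)) (C : Set ℝ) : Set ℝ :=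
  ⇑f '' (Subtype.val ⁻¹' C)

/-- `H_ε(C)`: the set of `φ ∈ H⁺` such that `φ(C)` has no 3-term AP of step `d ≥ ε`. -/
def Heps (C : Set ℝ) (ε : ℝ) : Set ↥Hplus :=
  {φ | ¬ ∃ x d : ℝ, ε ≤ d ∧ x ∈ imgC φ.1 C ∧ x + d ∈ imgC φ.1 C ∧ x + 2 * d ∈ imgC φ.1 C}

/-!
Cover `C` by countably many closed nowhere dense sets `K`. For fixed `K` and `ε > 0`, the maps
`φ` for which `φ(K)` contains a progression `x, x + d, x + 2d` with `d ≥ ε` form a closed set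
(the progressions can be taken along the compact `[0,1]³`), so it suffices that its complement is
dense. Given `φ`, the set `φ(K)` is again closed and nowhere dense: cut `[0,1]` into short blocks
separated by gaps avoiding `φ(K)`, pick in the blocks points forming a finite progression-free set
`T` (each new point only has to avoid finitely many values), and follow `φ` by a piecewise linear
homeomorphism squeezing every block into a tiny neighbourhood of its point of `T`. A small enough
neighbourhood of a finite progression-free set contains no progression of step `≥ ε`.
-/

open Filter Topology Metric

-- chosen so that `Heps C ε = {φ | NoLongAP ε (imgC φ C)}` holds definitionally
def NoLongAP (ε : ℝ) (A : Set ℝ) : Prop :=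
  ¬ ∃ x d : ℝ, ε ≤ d ∧ x ∈ A ∧ x + d ∈ A ∧ x + 2 * d ∈ A

lemma NoLongAP.mono {ε : ℝ} {A B : Set ℝ} (h : NoLongAP ε B) (hAB : A ⊆ B) : NoLongAP ε A :=
  fun ⟨x, d, hd, h₀, h₁, h₂⟩ => h ⟨x, d, hd, hAB h₀, hAB h₁, hAB h₂⟩

lemma FAP.zero_one : FAP {0, 1} := by
  rintro ⟨x, d, hd, h₀, h₁, h₂⟩
  simp only [mem_insert_iff, mem_singleton_iff] at h₀ h₁ h₂
  rcases h₀ with h₀ | h₀ <;> rcases h₁ with h₁ | h₁ <;> rcases h₂ with h₂ | h₂ <;> linarith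

namespace FAP

lemma exists_insert {A U : Set ℝ} (hA : FAP A) (hfin : A.Finite) (hU : U.Infinite) :
    ∃ t ∈ U, FAP (insert t A) := by
  -- `t` only has to avoid the finitely many points completing two points of `A` to a progression
  have hB : (image2 (fun a b => 2 * a - b) A A ∪ image2 (fun a b => (a + b) / 2) A A).Finite :=
    (hfin.image2 _ hfin).union (hfin.image2 _ hfin)
  obtain ⟨t, htU, htB⟩ := (hU.sdiff hB).nonempty
  refine ⟨t, htU, ?_⟩
  rintro ⟨x, d, hd, h₀ | h₀, h₁ | h₁, h₂ | h₂⟩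
  · linarith
  · linarith
  · linarith
  · exact htB (Or.inl ⟨x + d, h₁, x + 2 * d, h₂, by linarith⟩)
  · linarith
  · exact htB (Or.inr ⟨x, h₀, x + 2 * d, h₂, by linarith⟩)
  · exact htB (Or.inl ⟨x + d, h₁, x, h₀, by linarith⟩)
  · exact hA ⟨x, d, hd, h₀, h₁, h₂⟩

lemma exists_union_image {ι : Type*} [DecidableEq ι] {A : Set ℝ} (hA : FAP A) (hfin : A.Finite)
    (U : ι → Set ℝ) (s : Finset ι) (hU : ∀ i ∈ s, (U i).Infinite) :
    ∃ t : ι → ℝ, (∀ i ∈ s, t i ∈ U i) ∧ FAP (A ∪ t '' s) := by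
  induction s using Finset.induction_on with
  | empty => exact ⟨fun _ => 0, by simp, by simpa using hA⟩
  | insert i s hi ih =>
    obtain ⟨t, htU, ht⟩ := ih fun j hj => hU j (Finset.mem_insert_of_mem hj)
    obtain ⟨v, hvU, hv⟩ := ht.exists_insert (hfin.union (s.finite_toSet.image t))
      (hU i (Finset.mem_insert_self i s))
    have hupd : ∀ j ∈ s, Function.update t i v j = t j :=
      fun j hj => Function.update_of_ne (by rintro rfl; exact hi hj) _ _
    refine ⟨Function.update t i v, fun j hj => ?_, ?_⟩
    · rcases Finset.mem_insert.1 hj with rfl | hj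
      · simpa using hvU
      · rw [hupd j hj]
        exact htU j hj
    · rwa [Finset.coe_insert, image_insert_eq, Function.update_self, image_congr hupd,
        union_insert]

lemma exists_pos_noLongAP_cthickening {T : Set ℝ} (hT : FAP T) (hfin : T.Finite) {ε : ℝ}
    (hε : 0 < ε) : ∃ ρ > 0, NoLongAP ε (cthickening ρ T) := by
  have hsmall : ∀ᶠ ρ in 𝓝 (0 : ℝ), ρ < ε / 2 ∧
      ∀ a ∈ T, ∀ b ∈ T, ∀ c ∈ T, a + c ≠ 2 * b → ρ < |a + c - 2 * b| / 4 := by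
    refine (eventually_lt_nhds (by positivity)).and ?_
    refine (eventually_all_finite hfin).2 fun a _ => (eventually_all_finite hfin).2 fun b _ =>
      (eventually_all_finite hfin).2 fun c _ => ?_
    by_cases habc : a + c = 2 * b
    · exact Eventually.of_forall fun _ h => absurd habc h
    · have : 0 < |a + c - 2 * b| / 4 := by
        have := abs_pos.2 (sub_ne_zero.2 habc); positivity
      filter_upwards [eventually_lt_nhds this] with ρ hρ _ using hρ
  obtain ⟨ρ, ⟨hρε, hρT⟩, hρ⟩ :=
    ((hsmall.filter_mono (nhdsWithin_le_nhds (s := Ioi 0))).and self_mem_nhdsWithin).exists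
  refine ⟨ρ, hρ, ?_⟩
  rw [hfin.isCompact.cthickening_eq_biUnion_closedBall hρ.le]
  rintro ⟨x, d, hd, h₀, h₁, h₂⟩
  simp only [mem_iUnion₂, mem_closedBall, Real.dist_eq, abs_le] at h₀ h₁ h₂
  obtain ⟨a, ha, hxa⟩ := h₀
  obtain ⟨b, hb, hxb⟩ := h₁
  obtain ⟨c, hc, hxc⟩ := h₂
  have hAP : a + c ≠ 2 * b := fun h =>
    hT ⟨a, b - a, by linarith, ha, by simpa using hb, by convert hc using 1; linarith⟩
  have := hρT a ha b hb c hc hAP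
  have : |a + c - 2 * b| ≤ 4 * ρ := by rw [abs_le]; constructor <;> linarith
  linarith

end FAP

lemma exists_continuous_strictMono_extend_right {g : ℝ → ℝ} (hg : Continuous g) (hmono : StrictMono g) {a b c : ℝ}
    (hab : a < b) (hc : g a < c) :
    ∃ g' : ℝ → ℝ, Continuous g' ∧ StrictMono g' ∧ (∀ u ≤ a, g' u = g u) ∧ g' b = c := by
  set σ := (c - g a) / (b - a)
  have hσ : 0 < σ := div_pos (sub_pos.2 hc) (sub_pos.2 hab)
  refine ⟨fun u => g (min u a) + σ * (max u a - a), by fun_prop, fun u v huv => ?_,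
    fun u hu => by simp [min_eq_left hu, max_eq_right hu], ?_⟩
  · rcases lt_or_ge u a with hu | hu
    · have h₁ : g (min u a) < g (min v a) := hmono (by rw [min_eq_left hu.le]; exact lt_min huv hu)
      exact add_lt_add_of_lt_of_le h₁ (by gcongr)
    · simp only [min_eq_right hu, min_eq_right (hu.trans huv.le), max_eq_left hu,
        max_eq_left (hu.trans huv.le)]
      gcongr
  · simp only [min_eq_right hab.le, max_eq_left hab.le, σ]
    rw [div_mul_cancel₀ _ (sub_ne_zero.2 hab.ne')]
    ring

lemma exists_continuous_strictMono_interpolation {x y : ℕ → ℝ} {n : ℕ}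
    (hx : ∀ j < n, x j < x (j + 1)) (hy : ∀ j < n, y j < y (j + 1)) :
    ∃ g : ℝ → ℝ, Continuous g ∧ StrictMono g ∧ ∀ j ≤ n, g (x j) = y j := by
  induction n with
  | zero => exact ⟨fun u => u + (y 0 - x 0), by fun_prop, fun u v h => by simpa using h, by simp⟩
  | succ n ih =>
    obtain ⟨g, hg, hmono, hgxy⟩ := ih (fun j hj => hx j (by omega)) (fun j hj => hy j (by omega))
    obtain ⟨g', hg', hmono', hgg', hg'n⟩ := exists_continuous_strictMono_extend_right hg hmono (hx n n.lt_succ_self)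
      (by rw [hgxy n le_rfl]; exact hy n n.lt_succ_self)
    refine ⟨g', hg', hmono', fun j hj => ?_⟩
    rcases hj.lt_or_eq with hj | rfl
    · have hxj : x j ≤ x n := (strictMonoOn_Iic_of_lt_succ fun m hm => hx m hm).monotoneOn
        (mem_Iic.2 (by omega)) (mem_Iic.2 (by omega)) (by omega)
      rw [hgg' _ hxj, hgxy j (by omega)]
    · exact hg'n

def interleave {α : Type*} (a b : ℕ → α) (j : ℕ) : α := if Even j then a (j / 2) else b (j / 2)

@[simp] lemma interleave_two_mul {α : Type*} (a b : ℕ → α) (k : ℕ) :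
    interleave a b (2 * k) = a k := by
  simp [interleave]

@[simp] lemma interleave_two_mul_add_one {α : Type*} (a b : ℕ → α) (k : ℕ) :
    interleave a b (2 * k + 1) = b k := by
  simp [interleave, show (2 * k + 1) / 2 = k by omega]

lemma interleave_lt_succ {α : Type*} [LT α] {a b : ℕ → α} {N : ℕ} (hab : ∀ k ≤ N, a k < b k)
    (hba : ∀ k < N, b k < a (k + 1)) :
    ∀ j < 2 * N + 1, interleave a b j < interleave a b (j + 1) := by
  intro j hj
  obtain ⟨k, rfl | rfl⟩ := Nat.even_or_odd' j
  · simpa using hab k (by omega)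
  · simpa [show 2 * k + 1 + 1 = 2 * (k + 1) by ring] using hba k (by omega)

lemma exists_continuous_strictMono_blocks {L R l r : ℕ → ℝ} {N : ℕ}
    (hLR : ∀ k ≤ N, L k < R k) (hRL : ∀ k < N, R k < L (k + 1))
    (hlr : ∀ k ≤ N, l k < r k) (hrl : ∀ k < N, r k < l (k + 1)) :
    ∃ g : ℝ → ℝ, Continuous g ∧ StrictMono g ∧ ∀ k ≤ N, g (L k) = l k ∧ g (R k) = r k := by
  obtain ⟨g, hg, hmono, hgxy⟩ := exists_continuous_strictMono_interpolation
    (interleave_lt_succ hLR hRL) (interleave_lt_succ hlr hrl)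
  refine ⟨g, hg, hmono, fun k hk => ⟨?_, ?_⟩⟩
  · simpa using hgxy (2 * k) (by omega)
  · simpa using hgxy (2 * k + 1) (by omega)

lemma exists_block_or_gap {L R : ℕ → ℝ} {N : ℕ} {u : ℝ} (hu : u ∈ Icc (L 0) (R N)) :
    ∃ k ≤ N, u ∈ Icc (L k) (R k) ∨ (k < N ∧ u ∈ Ioo (R k) (L (k + 1))) := by
  induction N with
  | zero => exact ⟨0, le_rfl, Or.inl hu⟩
  | succ N ih =>
    rcases le_or_gt u (R N) with h | h
    · obtain ⟨k, hk, hku⟩ := ih ⟨hu.1, h⟩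
      exact ⟨k, by omega, hku.imp id fun h => ⟨by omega, h.2⟩⟩
    rcases lt_or_ge u (L (N + 1)) with h' | h'
    · exact ⟨N, by omega, Or.inr ⟨by omega, h, h'⟩⟩
    · exact ⟨N + 1, le_rfl, Or.inl ⟨h', hu.2⟩⟩

lemma Monotone.abs_sub_le_of_mapsTo_blocks {g : ℝ → ℝ} (hg : Monotone g) {L R : ℕ → ℝ} {N : ℕ}
    {D : ℝ} (hLR : ∀ k ≤ N, L k ≤ R k)
    (hmaps : ∀ k ≤ N, MapsTo g (Icc (L k) (R k)) (Icc (L k) (R k)))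
    (hD : ∀ k ≤ N, R k - L k ≤ D) (hD' : ∀ k < N, R (k + 1) - L k ≤ D) {u : ℝ}
    (hu : u ∈ Icc (L 0) (R N)) : |g u - u| ≤ D := by
  rw [abs_le]
  obtain ⟨k, hk, hblock | ⟨hkN, hgap⟩⟩ := exists_block_or_gap hu
  · have hgu := hmaps k hk hblock
    have := hD k hk
    constructor <;> linarith [hgu.1, hgu.2, hblock.1, hblock.2]
  · have h₁ := hmaps k hk (right_mem_Icc.2 (hLR k hk))
    have h₂ := hmaps (k + 1) hkN (left_mem_Icc.2 (hLR (k + 1) hkN))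
    have h₃ := hg hgap.1.le
    have h₄ := hg hgap.2.le
    have := hD' k hkN
    have := hLR k hk
    have := hLR (k + 1) hkN
    constructor <;> linarith [h₁.1, h₂.2, hgap.1, hgap.2]

lemma IsNowhereDense.exists_Ioo_disjoint {K : Set ℝ} (hK : IsNowhereDense K) {a b : ℝ}
    (hab : a < b) : ∃ α β, a ≤ α ∧ α < β ∧ β ≤ b ∧ Disjoint (Ioo α β) K := by
  have hdense : Dense (closure K)ᶜ := interior_eq_empty_iff_dense_compl.1 hK
  obtain ⟨α, β, hαβ, hsub⟩ := (isOpen_Ioo.inter isClosed_closure.isOpen_compl).exists_Ioo_subset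
    (hdense.inter_open_nonempty _ isOpen_Ioo (nonempty_Ioo.2 hab))
  obtain ⟨haα, hβb⟩ := (Ioo_subset_Ioo_iff hαβ).1 (hsub.trans inter_subset_left)
  exact ⟨α, β, haα, hαβ, hβb, disjoint_left.2 fun u hu huK => (hsub hu).2 (subset_closure huK)⟩

lemma IsNowhereDense.exists_blocks {K : Set ℝ} (hK : IsNowhereDense K) {D : ℝ} (hD : 0 < D) :
    ∃ n > 0, ∃ L R : ℕ → ℝ, L 0 = 0 ∧ R n = 1 ∧ (∀ k ≤ n, L k < R k) ∧
      (∀ k < n, R k < L (k + 1) ∧ Disjoint (Ioo (R k) (L (k + 1))) K) ∧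
      (∀ k ≤ n, R k - L k ≤ D) ∧ ∀ k < n, R (k + 1) - L k ≤ D := by
  obtain ⟨n, hn⟩ := exists_nat_gt (3 / D)
  have hn0 : 0 < n := by exact_mod_cast (div_pos three_pos hD).trans hn
  set w : ℝ := 1 / (n + 1)
  have hw : 0 < w := by positivity
  have hnw : (n + 1) * w = 1 := by simp only [w]; field_simp
  have hwD : 3 * w ≤ D := by
    rw [div_lt_iff₀ hD] at hn
    simp only [w]
    rw [← mul_div_assoc, div_le_iff₀ (by positivity)]
    nlinarith
  have hcast : ∀ k : ℕ, ((k + 1 : ℕ) : ℝ) * w = k * w + w := fun k => by push_cast; ring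
  choose α β hα hαβ hβ hdisj using fun m : ℕ =>
    hK.exists_Ioo_disjoint (a := m * w - w / 4) (b := m * w + w / 4) (by linarith)
  set L : ℕ → ℝ := fun k => if k = 0 then 0 else β k
  set R : ℕ → ℝ := fun k => if k = n then 1 else α (k + 1)
  have hL : ∀ k : ℕ, k * w - w / 4 ≤ L k ∧ L k ≤ k * w + w / 4 := by
    intro k
    simp only [L]
    split_ifs with hk
    · subst hk; constructor <;> simp <;> linarith
    · exact ⟨(hα k).trans (hαβ k).le, hβ k⟩
  have hR : ∀ k ≤ n, k * w + w - w / 4 ≤ R k ∧ R k ≤ k * w + w + w / 4 := by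
    intro k hk
    simp only [R]
    split_ifs with hkn
    · subst hkn; constructor <;> linarith
    · have := hα (k + 1); have := hαβ (k + 1); have := hβ (k + 1); have := hcast k
      constructor <;> linarith
  refine ⟨n, hn0, L, R, by simp [L], by simp [R], fun k hk => ?_, fun k hk => ?_,
    fun k hk => ?_, fun k hk => ?_⟩
  · linarith [hL k, hR k hk]
  · simp only [L, R, Nat.add_one_ne_zero, if_false, hk.ne, hdisj (k + 1), and_true]
    exact hαβ (k + 1)
  · linarith [hL k, hR k hk]
  · linarith [hL k, hR (k + 1) hk, hcast k]

lemma exists_FAP_targets {L R : ℕ → ℝ} {n : ℕ} (hn : 0 < n) (hLR : ∀ k ≤ n, L k < R k)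
    (hL : L 0 = 0) (hR : R n = 1) :
    ∃ T : Set ℝ, T.Finite ∧ FAP T ∧
      ∃ τ : ℕ → ℝ, τ 0 = 0 ∧ τ n = 1 ∧ ∀ k ≤ n, τ k ∈ T ∩ Icc (L k) (R k) := by
  obtain ⟨t, ht, hFAP⟩ := FAP.zero_one.exists_union_image (toFinite _) (fun k => Ioo (L k) (R k))
    (Finset.Ioo 0 n) fun k hk => Ioo_infinite (hLR k (Finset.mem_Ioo.1 hk).2.le)
  refine ⟨_, (toFinite _).union ((Finset.finite_toSet _).image t), hFAP,
    fun k => if k = 0 then 0 else if k = n then 1 else t k, by simp, by simp [hn.ne'],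
    fun k hk => ?_⟩
  have := hLR k hk
  dsimp only
  split_ifs with h0 hn'
  · subst h0; exact ⟨by simp, hL.le, by linarith⟩
  · subst hn'; exact ⟨by simp, by linarith, hR.ge⟩
  · have hk' : k ∈ Finset.Ioo 0 n := Finset.mem_Ioo.2 ⟨by omega, by omega⟩
    exact ⟨Or.inr ⟨k, hk', rfl⟩, Ioo_subset_Icc_self (ht k hk')⟩

theorem IsNowhereDense.exists_strictMono_near_id_noLongAP {K : Set ℝ} (hK : IsNowhereDense K)
    (hKI : K ⊆ Icc 0 1) {ε δ : ℝ} (hε : 0 < ε) (hδ : 0 < δ) :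
    ∃ h : ℝ → ℝ, Continuous h ∧ StrictMono h ∧ h 0 = 0 ∧ h 1 = 1 ∧
      (∀ u ∈ Icc (0 : ℝ) 1, |h u - u| < δ) ∧ NoLongAP ε (h '' K) := by
  obtain ⟨n, hn, L, R, hL0, hRn, hLR, hgap, hD, hD'⟩ := hK.exists_blocks (half_pos hδ)
  obtain ⟨T, hTfin, hT, τ, hτ0, hτn, hτ⟩ := exists_FAP_targets hn hLR hL0 hRn
  obtain ⟨ρ, hρ, hTρ⟩ := hT.exists_pos_noLongAP_cthickening hTfin hε
  -- block `k` is squeezed into the `ρ`-neighbourhood of its target `τ k ∈ T`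
  set l : ℕ → ℝ := fun k => max (τ k - ρ) (L k)
  set r : ℕ → ℝ := fun k => min (τ k + ρ) (R k)
  have hlr : ∀ k ≤ n, l k < r k := fun k hk => by
    have hτk := (hτ k hk).2
    have := hLR k hk
    simp only [l, r, max_lt_iff, lt_min_iff]
    refine ⟨⟨?_, ?_⟩, ?_, ?_⟩ <;> linarith [hτk.1, hτk.2]
  have hrl : ∀ k < n, r k < l (k + 1) := fun k hk =>
    (min_le_right _ _).trans_lt ((hgap k hk).1.trans_le (le_max_right _ _))
  obtain ⟨g, hg, hmono, hgLR⟩ :=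
    exists_continuous_strictMono_blocks hLR (fun k hk => (hgap k hk).1) hlr hrl
  have hmaps : ∀ k ≤ n, MapsTo g (Icc (L k) (R k)) (Icc (l k) (r k)) := fun k hk _ hu =>
    ⟨(hgLR k hk).1 ▸ hmono.monotone hu.1, (hgLR k hk).2 ▸ hmono.monotone hu.2⟩
  have hI : Icc (0 : ℝ) 1 = Icc (L 0) (R n) := by rw [hL0, hRn]
  refine ⟨g, hg, hmono, ?_, ?_, fun u hu => ?_, hTρ.mono ?_⟩
  · rw [← hL0, (hgLR 0 n.zero_le).1]
    simp [l, hτ0, hL0, hρ.le]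
  · rw [← hRn, (hgLR n le_rfl).2]
    simp [r, hτn, hRn, hρ.le]
  · have := hmono.monotone.abs_sub_le_of_mapsTo_blocks (fun k hk => (hLR k hk).le)
      (fun k hk => (hmaps k hk).mono_right (Icc_subset_Icc (le_max_right _ _) (min_le_right _ _)))
      hD hD' (hI ▸ hu)
    linarith
  · rintro _ ⟨u, huK, rfl⟩
    obtain ⟨k, hk, hblock | ⟨hkn, hu⟩⟩ := exists_block_or_gap (hI ▸ hKI huK)
    · have hgu := hmaps k hk hblock
      refine mem_cthickening_of_dist_le _ (τ k) _ _ (hτ k hk).1 ?_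
      rw [Real.dist_eq, abs_le]
      constructor <;>
        linarith [le_max_left (τ k - ρ) (L k), min_le_left (τ k + ρ) (R k), hgu.1, hgu.2]
    · exact absurd huK (disjoint_left.1 (hgap k hkn).2 hu)

lemma IsNowhereDense.union {X : Type*} [TopologicalSpace X] {s t : Set X} (hs : IsNowhereDense s)
    (ht : IsNowhereDense t) : IsNowhereDense (s ∪ t) := by
  rw [IsNowhereDense, interior_eq_empty_iff_dense_compl] at hs ht ⊢
  rw [closure_union, compl_union]
  exact hs.inter_of_isOpen_left ht isClosed_closure.isOpen_compl

lemma isOpen_setOf_noLongAP {K : Set ℝ} (hK : IsClosed K) (ε : ℝ) :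
    IsOpen {f : C(Icc (0 : ℝ) 1, ℝ) | NoLongAP ε (imgC f K)} := by
  -- the complement is the projection of a closed set along the compact factor `[0,1]³`
  let Z : Set ((Icc (0 : ℝ) 1 × Icc (0 : ℝ) 1 × Icc (0 : ℝ) 1) × C(Icc (0 : ℝ) 1, ℝ)) :=
    {q | (q.1.1 : ℝ) ∈ K ∧ (q.1.2.1 : ℝ) ∈ K ∧ (q.1.2.2 : ℝ) ∈ K ∧
      ε ≤ q.2 q.1.2.1 - q.2 q.1.1 ∧ q.2 q.1.2.2 - q.2 q.1.2.1 = q.2 q.1.2.1 - q.2 q.1.1}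
  have ha : Continuous fun q : (Icc (0 : ℝ) 1 × Icc (0 : ℝ) 1 × Icc (0 : ℝ) 1) ×
      C(Icc (0 : ℝ) 1, ℝ) => q.2 q.1.1 := by fun_prop
  have hb : Continuous fun q : (Icc (0 : ℝ) 1 × Icc (0 : ℝ) 1 × Icc (0 : ℝ) 1) ×
      C(Icc (0 : ℝ) 1, ℝ) => q.2 q.1.2.1 := by fun_prop
  have hc : Continuous fun q : (Icc (0 : ℝ) 1 × Icc (0 : ℝ) 1 × Icc (0 : ℝ) 1) ×
      C(Icc (0 : ℝ) 1, ℝ) => q.2 q.1.2.2 := by fun_prop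
  have hZ : IsClosed Z :=
    (hK.preimage (by fun_prop)).inter <| (hK.preimage (by fun_prop)).inter <|
      (hK.preimage (by fun_prop)).inter <|
        (isClosed_le continuous_const (hb.sub ha)).inter (isClosed_eq (hc.sub hb) (hb.sub ha))
  rw [← isClosed_compl_iff]
  convert isClosedMap_snd_of_compactSpace _ hZ using 1
  ext f
  simp only [NoLongAP, imgC, mem_compl_iff, mem_ofPred_eq, not_not, mem_image, mem_preimage, Z]
  constructor
  · rintro ⟨x, d, hd, ⟨a, ha, rfl⟩, ⟨b, hb, hbx⟩, ⟨c, hc, hcx⟩⟩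
    exact ⟨((a, b, c), f), ⟨ha, hb, hc, by linarith, by linarith⟩, rfl⟩
  · rintro ⟨⟨⟨a, b, c⟩, f⟩, ⟨ha, hb, hc, hd, hAP⟩, rfl⟩
    exact ⟨f a, f b - f a, hd, ⟨a, ha, rfl⟩, ⟨b, hb, by ring⟩, ⟨c, hc, by linarith⟩⟩

lemma isOpen_Heps {K : Set ℝ} (hK : IsClosed K) (ε : ℝ) : IsOpen (Heps K ε) :=
  (isOpen_setOf_noLongAP hK ε).preimage continuous_subtype_val

lemma mem_Icc_of_mem_Hplus {φ : C(Icc (0 : ℝ) 1, ℝ)} (hφ : φ ∈ Hplus) (u : Icc (0 : ℝ) 1) :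
    φ u ∈ Icc 0 1 := by
  have h0 := hφ.1.monotone (show (⟨0, by norm_num⟩ : Icc (0 : ℝ) 1) ≤ u from u.2.1)
  have h1 := hφ.1.monotone (show u ≤ ⟨1, by norm_num⟩ from u.2.2)
  rw [hφ.2.1] at h0
  rw [hφ.2.2] at h1
  exact ⟨h0, h1⟩

lemma isNowhereDense_imgC {φ : C(Icc (0 : ℝ) 1, ℝ)} (hφ : φ ∈ Hplus) {K : Set ℝ}
    (hK : IsClosed K) (hK' : IsNowhereDense K) : IsNowhereDense (imgC φ K) := by
  have hclosed : IsClosed (imgC φ K) :=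
    ((hK.preimage continuous_subtype_val).isCompact.image φ.continuous).isClosed
  rw [hclosed.isNowhereDense_iff, eq_empty_iff_forall_notMem]
  intro y hy
  obtain ⟨x₀, -, rfl⟩ := interior_subset hy
  set φ' : ℝ → ℝ := fun z => φ (projIcc 0 1 zero_le_one z)
  have hV : IsOpen (φ' ⁻¹' interior (imgC φ K) ∩ Ioo 0 1) :=
    (isOpen_interior.preimage (by fun_prop)).inter isOpen_Ioo
  have hsub : φ' ⁻¹' interior (imgC φ K) ∩ Ioo 0 1 ⊆ K := by
    rintro z ⟨hzV, hz⟩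
    obtain ⟨w, hwK, hw⟩ := interior_subset hzV
    rw [hφ.1.injective hw, projIcc_of_mem _ (Ioo_subset_Icc_self hz)] at hwK
    exact hwK
  obtain ⟨z, hz⟩ : (φ' ⁻¹' interior (imgC φ K) ∩ Ioo 0 1).Nonempty :=
    mem_closure_iff.1 (by rw [closure_Ioo (zero_ne_one' ℝ)]; exact x₀.2) _
      (isOpen_interior.preimage (by fun_prop)) (show (x₀ : ℝ) ∈ _ by simpa [φ'] using hy)
  rw [hK.isNowhereDense_iff] at hK'
  exact (hK' ▸ interior_maximal hsub hV) hz

lemma dense_Heps {K : Set ℝ} (hK : IsClosed K) (hK' : IsNowhereDense K) {ε : ℝ} (hε : 0 < ε) :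
    Dense (Heps K ε) := by
  refine Metric.dense_iff.2 fun φ r hr => ?_
  obtain ⟨h, hc, hmono, h0, h1, hclose, hAP⟩ :=
    (isNowhereDense_imgC φ.2 hK hK').exists_strictMono_near_id_noLongAP
      (image_subset_iff.2 fun u _ => mem_Icc_of_mem_Hplus φ.2 u) hε (half_pos hr)
  set ψ : C(Icc (0 : ℝ) 1, ℝ) := (⟨h, hc⟩ : C(ℝ, ℝ)).comp φ.1
  have hψ : ψ ∈ Hplus := ⟨hmono.comp φ.2.1, by simp only [ψ, ContinuousMap.comp_apply,
    ContinuousMap.coe_mk, φ.2.2.1, h0], by simp only [ψ, ContinuousMap.comp_apply,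
    ContinuousMap.coe_mk, φ.2.2.2, h1]⟩
  refine ⟨⟨ψ, hψ⟩, ?_, ?_⟩
  · rw [mem_ball, Subtype.dist_eq]
    refine ((ContinuousMap.dist_le (half_pos hr).le).2 fun u => ?_).trans_lt (half_lt_self hr)
    exact (hclose _ (mem_Icc_of_mem_Hplus φ.2 u)).le
  · show NoLongAP ε (imgC ψ K)
    rwa [imgC, ContinuousMap.coe_comp, image_comp]

lemma isNowhereDense_compl_Heps {K : Set ℝ} (hK : IsClosed K) (hK' : IsNowhereDense K) {ε : ℝ}
    (hε : 0 < ε) : IsNowhereDense (Heps K ε)ᶜ :=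
  (isClosed_isNowhereDense_iff_compl.2 ⟨by rw [compl_compl]; exact isOpen_Heps hK ε,
    by rw [compl_compl]; exact dense_Heps hK hK' hε⟩).2

theorem residually_many_FAP_images_general (C : Set ℝ) (hmeager : IsMeagre C) :
    IsMeagre {φ : ↥Hplus | ¬ FAP (imgC φ.1 C)} := by
  obtain ⟨S, hS, hScount, hCS⟩ := isMeagre_iff_countable_union_isNowhereDense.1 hmeager
  have : Countable S := hScount.to_subtype
  have hsmall : ∀ (A B D : S) (n : ℕ), IsMeagre (Heps (closure (A ∪ B ∪ D)) (1 / (n + 1)))ᶜ :=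
    fun A B D n => (isNowhereDense_compl_Heps isClosed_closure
      (((hS A A.2).union (hS B B.2)).union (hS D D.2)).closure (by positivity)).isMeagre
  refine (isMeagre_iUnion fun A => isMeagre_iUnion fun B => isMeagre_iUnion fun D =>
    isMeagre_iUnion (hsmall A B D)).mono fun φ hφ => ?_
  obtain ⟨x, d, hd, ⟨a, ha, rfl⟩, ⟨b, hb, hbx⟩, ⟨c, hc, hcx⟩⟩ := not_not.1 hφ
  obtain ⟨A, hA, haA⟩ := mem_sUnion.1 (hCS ha)
  obtain ⟨B, hB, hbB⟩ := mem_sUnion.1 (hCS hb)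
  obtain ⟨D, hD, hcD⟩ := mem_sUnion.1 (hCS hc)
  obtain ⟨n, hn⟩ := exists_nat_one_div_lt hd
  simp only [mem_iUnion]
  exact ⟨⟨A, hA⟩, ⟨B, hB⟩, ⟨D, hD⟩, n, fun hgood => hgood ⟨φ.1 a, d, hn.le,
    ⟨a, subset_closure (Or.inl (Or.inl haA)), rfl⟩, ⟨b, subset_closure (Or.inl (Or.inr hbB)), hbx⟩,
    ⟨c, subset_closure (Or.inr hcD), hcx⟩⟩⟩

/-- For meager `C ⊆ [0,1]`, the set of `φ ∈ H⁺` with `φ(C)` free of APs is residual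
in `H⁺`: its complement in `H⁺` is meager (in the sup-norm subspace topology). -/
theorem residually_many_FAP_images (C : Set ℝ) (hC : C ⊆ Set.Icc 0 1)
    (hmeager : IsMeagre C) :
    IsMeagre {φ : ↥Hplus | ¬ FAP (imgC φ.1 C)} :=
  residually_many_FAP_images_general C hmeager
end
end

section
/- Let C ⊆ [0,1] be a nowhere dense set, let f ∈ H⁺ and let ε > 0. Then there exists g ∈ H⁺ such that ‖g − f‖ < ε (supremum norm) and the set g(C) contains no 3-term arithmetic progression with step d ≥ ε, i.e., there are no x ∈ ℝ and d ≥ ε with x, x+d, x+2d ∈ g(C). -/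
open Set

noncomputable section

/-!
Fix a fine grid `0 = t₀ < t₁ < ⋯ < tₙ = 1` which is robustly free of 3-term progressions:
`|tₐ + t_c - 2 t_b| ≥ 1/(4n³)` for all `a < b < c`; the bent grid `tᵢ = i (i + 8n² - n) / (8n³)`
does this, because `8n³ (tₐ + t_c - 2 t_b)` is an integer which is `(c - a)² / 2` if `a + c = 2b`
and is dominated by `(8n² - n)(a + c - 2b)` otherwise. Since `C` is nowhere dense, `f(C)` misses
an interval `(aᵢ, bᵢ)` inside each `(tᵢ, tᵢ₊₁)`. The staircase `S` which is constant off these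
intervals and climbs from `tᵢ` to `tᵢ₊₁` linearly on `(aᵢ, bᵢ)` maps `f(C)` into the grid, and
`g = ((1 - δ) S + δ id) ∘ f` is an increasing homeomorphism within one grid step of `f` mapping
`C` into the `δ`-neighbourhood of the grid. For `δ` small, a progression of step `d ≥ ε` in that
neighbourhood would give grid indices `a < b < c` violating the robust AP-freeness.
-/

section Staircase

open Finset (range sum_range_sub sum_congr sum_eq_zero mem_range sum_range_add_sum_Ico
  sum_range_succ)

def ramp (a b y : ℝ) : ℝ := max 0 (min 1 ((y - a) / (b - a)))

lemma ramp_mem_Icc (a b y : ℝ) : ramp a b y ∈ Icc 0 1 :=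
  ⟨le_max_left _ _, max_le zero_le_one (min_le_left _ _)⟩

lemma ramp_of_le {a b y : ℝ} (hab : a ≤ b) (hy : y ≤ a) : ramp a b y = 0 :=
  max_eq_left <| (min_le_right _ _).trans <|
    div_nonpos_of_nonpos_of_nonneg (sub_nonpos.2 hy) (sub_nonneg.2 hab)

lemma ramp_of_ge {a b y : ℝ} (hab : a < b) (hy : b ≤ y) : ramp a b y = 1 := by
  have : 1 ≤ (y - a) / (b - a) := (one_le_div (sub_pos.2 hab)).2 (by linarith)
  simp [ramp, min_eq_left this]

lemma monotone_ramp {a b : ℝ} (hab : a ≤ b) : Monotone (ramp a b) := fun _ _ hxy =>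
  max_le_max le_rfl <| min_le_min le_rfl <|
    div_le_div_of_nonneg_right (sub_le_sub_right hxy a) (sub_nonneg.2 hab)

lemma continuous_ramp (a b : ℝ) : Continuous (ramp a b) := by
  unfold ramp; fun_prop

lemma exists_mem_Icc_succ {n : ℕ} {t : ℕ → ℝ} (hn : n ≠ 0) {y : ℝ} (hy : y ∈ Icc (t 0) (t n)) :
    ∃ i < n, y ∈ Icc (t i) (t (i + 1)) := by
  induction n with
  | zero => exact absurd rfl hn
  | succ m ih =>
    rcases eq_or_ne m 0 with rfl | hm
    · exact ⟨0, zero_lt_one, hy⟩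
    by_cases hym : y ≤ t m
    · obtain ⟨i, hi, hyi⟩ := ih hm ⟨hy.1, hym⟩
      exact ⟨i, hi.trans m.lt_succ_self, hyi⟩
    · exact ⟨m, m.lt_succ_self, (not_le.1 hym).le, hy.2⟩

def staircase (n : ℕ) (t a b : ℕ → ℝ) (y : ℝ) : ℝ :=
  t 0 + ∑ j ∈ range n, (t (j + 1) - t j) * ramp (a j) (b j) y

lemma continuous_staircase (n : ℕ) (t a b : ℕ → ℝ) : Continuous (staircase n t a b) :=
  continuous_const.add <|
    continuous_finsetSum _ fun _ _ => continuous_const.mul (continuous_ramp _ _)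

variable {n : ℕ} {t a b : ℕ → ℝ} (ht : Monotone t) (hta : ∀ j < n, t j ≤ a j)
  (hab : ∀ j < n, a j < b j) (hbt : ∀ j < n, b j ≤ t (j + 1))
include ht hta hab hbt

lemma staircase_eq {i : ℕ} (hi : i < n) {y : ℝ} (hy : y ∈ Icc (t i) (t (i + 1))) :
    staircase n t a b y = t i + (t (i + 1) - t i) * ramp (a i) (b i) y := by
  have below : ∑ j ∈ range i, (t (j + 1) - t j) * ramp (a j) (b j) y = t i - t 0 := by
    rw [← sum_range_sub]
    refine sum_congr rfl fun j hj => ?_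
    have hj : j < i := mem_range.1 hj
    rw [ramp_of_ge (hab j (hj.trans hi)) ((hbt j (hj.trans hi)).trans ((ht hj).trans hy.1)),
      mul_one]
  have above : ∑ j ∈ Finset.Ico (i + 1) n, (t (j + 1) - t j) * ramp (a j) (b j) y = 0 := by
    refine sum_eq_zero fun j hj => ?_
    obtain ⟨hij, hjn⟩ := Finset.mem_Ico.1 hj
    rw [ramp_of_le (hab j hjn).le (hy.2.trans ((ht hij).trans (hta j hjn))), mul_zero]
  rw [staircase, ← sum_range_add_sum_Ico _ hi, sum_range_succ, below, above]
  ring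

lemma staircase_mem_Icc {i : ℕ} (hi : i < n) {y : ℝ} (hy : y ∈ Icc (t i) (t (i + 1))) :
    staircase n t a b y ∈ Icc (t i) (t (i + 1)) := by
  have hti : 0 ≤ t (i + 1) - t i := sub_nonneg.2 (ht i.le_succ)
  obtain ⟨h0, h1⟩ := ramp_mem_Icc (a i) (b i) y
  rw [staircase_eq ht hta hab hbt hi hy]
  constructor <;> nlinarith

omit hta hbt in
lemma monotone_staircase : Monotone (staircase n t a b) := by
  intro x y hxy
  unfold staircase
  gcongr with j hj
  · exact sub_nonneg.2 (ht j.le_succ)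
  · exact monotone_ramp (hab j (mem_range.1 hj)).le hxy

omit hbt in
lemma staircase_first : staircase n t a b (t 0) = t 0 := by
  rw [staircase, sum_eq_zero fun j hj => ?_, add_zero]
  rw [ramp_of_le (hab j (mem_range.1 hj)).le ((ht j.zero_le).trans (hta j (mem_range.1 hj))),
    mul_zero]

omit hta in
lemma staircase_last : staircase n t a b (t n) = t n := by
  rw [staircase, sum_congr rfl fun j hj => ?_, sum_range_sub, add_sub_cancel]
  have hj := mem_range.1 hj
  rw [ramp_of_ge (hab j hj) ((hbt j hj).trans (ht hj)), mul_one]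

lemma abs_staircase_sub_le (hn : n ≠ 0) {s : ℝ} (hs : ∀ i < n, t (i + 1) - t i ≤ s) {y : ℝ}
    (hy : y ∈ Icc (t 0) (t n)) : |staircase n t a b y - y| ≤ s := by
  obtain ⟨i, hi, hyi⟩ := exists_mem_Icc_succ hn hy
  have hSi := staircase_mem_Icc ht hta hab hbt hi hyi
  have := hs i hi
  rw [abs_le]
  constructor <;> linarith [hyi.1, hyi.2, hSi.1, hSi.2]

lemma exists_staircase_eq (hn : n ≠ 0) {y : ℝ} (hy : y ∈ Icc (t 0) (t n))
    (hgap : ∀ i < n, y ∉ Ioo (a i) (b i)) : ∃ j ≤ n, staircase n t a b y = t j := by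
  obtain ⟨i, hi, hyi⟩ := exists_mem_Icc_succ hn hy
  rw [staircase_eq ht hta hab hbt hi hyi]
  rcases le_or_gt y (a i) with hya | hay
  · exact ⟨i, hi.le, by rw [ramp_of_le (hab i hi).le hya, mul_zero, add_zero]⟩
  · have hby : b i ≤ y := not_lt.1 fun hyb => hgap i hi ⟨hay, hyb⟩
    exact ⟨i + 1, hi, by rw [ramp_of_ge (hab i hi) hby, mul_one, add_sub_cancel]⟩

end Staircase

section Grid

lemma two_le_abs_second_diff {a b c n : ℤ} (ha : 0 ≤ a) (hab : a < b) (hbc : b < c)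
    (hcn : c ≤ n) :
    2 ≤ |(8 * n ^ 2 - n) * (a + c - 2 * b) + (a ^ 2 + c ^ 2 - 2 * b ^ 2)| := by
  have hn : 2 ≤ n := by omega
  have hsq : a ^ 2 + c ^ 2 - 2 * b ^ 2 ∈ Icc (-2 * n ^ 2) (2 * n ^ 2) :=
    ⟨by nlinarith, by nlinarith⟩
  rcases lt_trichotomy (a + c - 2 * b) 0 with hk | hk | hk
  · refine le_abs.2 (Or.inr ?_)
    nlinarith [hsq.2]
  · have : 2 * (a ^ 2 + c ^ 2 - 2 * b ^ 2) = (c - a) ^ 2 := by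
      obtain rfl : c = 2 * b - a := by omega
      ring
    rw [hk, mul_zero, zero_add]
    exact le_abs.2 (Or.inl (by nlinarith))
  · refine le_abs.2 (Or.inl ?_)
    nlinarith [hsq.1]

def apFreeGrid (n i : ℕ) : ℝ := i * (i + 8 * n ^ 2 - n) / (8 * n ^ 3)

variable {n : ℕ}

lemma apFreeGrid_zero : apFreeGrid n 0 = 0 := by simp [apFreeGrid]

lemma apFreeGrid_self (hn : n ≠ 0) : apFreeGrid n n = 1 := by
  unfold apFreeGrid
  field_simp
  ring

lemma apFreeGrid_succ_sub (i : ℕ) :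
    apFreeGrid n (i + 1) - apFreeGrid n i = (2 * i + 1 + 8 * n ^ 2 - n) / (8 * n ^ 3) := by
  unfold apFreeGrid
  push_cast
  ring

lemma strictMono_apFreeGrid (hn : n ≠ 0) : StrictMono (apFreeGrid n) := by
  refine strictMono_nat_of_lt_succ fun i => sub_pos.1 ?_
  have hn : (1 : ℝ) ≤ n := by exact_mod_cast Nat.one_le_iff_ne_zero.2 hn
  rw [apFreeGrid_succ_sub]
  exact div_pos (by nlinarith [(i.cast_nonneg : (0 : ℝ) ≤ i)]) (by positivity)

lemma apFreeGrid_succ_sub_le {i : ℕ} (hi : i < n) :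
    apFreeGrid n (i + 1) - apFreeGrid n i ≤ 2 / n := by
  have hin : (i : ℝ) + 1 ≤ n := by exact_mod_cast hi
  have hn : (1 : ℝ) ≤ n := by linarith [(i.cast_nonneg : (0 : ℝ) ≤ i)]
  rw [apFreeGrid_succ_sub, div_le_div_iff₀ (by positivity) (by positivity)]
  nlinarith

lemma one_div_le_abs_apFreeGrid_second_diff {a b c : ℕ} (hab : a < b) (hbc : b < c) (hcn : c ≤ n) :
    1 / (4 * n ^ 3) ≤ |apFreeGrid n a + apFreeGrid n c - 2 * apFreeGrid n b| := by
  have hn : (0 : ℝ) < n := by exact_mod_cast (show 0 < n by omega)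
  set N : ℤ := (8 * n ^ 2 - n) * (a + c - 2 * b) + (a ^ 2 + c ^ 2 - 2 * b ^ 2)
  have hN : (2 : ℝ) ≤ |(N : ℝ)| := by
    exact_mod_cast two_le_abs_second_diff (by positivity) (by omega) (by omega) (by omega)
  have hdiff : apFreeGrid n a + apFreeGrid n c - 2 * apFreeGrid n b = N / (8 * n ^ 3) := by
    simp only [apFreeGrid, N]
    push_cast
    ring
  rw [hdiff, abs_div, abs_of_pos (by positivity : (0 : ℝ) < 8 * n ^ 3),
    div_le_div_iff₀ (by positivity) (by positivity)]
  nlinarith [pow_pos hn 3]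

end Grid

lemma not_exists_AP_of_near_grid {n : ℕ} {t : ℕ → ℝ} (ht : Monotone t) {δ ε : ℝ}
    (hsep : ∀ a b c, a < b → b < c → c ≤ n → 4 * δ < |t a + t c - 2 * t b|) (hδε : 2 * δ < ε)
    {A : Set ℝ} (hA : ∀ x ∈ A, ∃ i ≤ n, |x - t i| ≤ δ) :
    ¬ ∃ x d : ℝ, ε ≤ d ∧ x ∈ A ∧ x + d ∈ A ∧ x + 2 * d ∈ A := by
  rintro ⟨x, d, hd, hx, hxd, hx2d⟩
  obtain ⟨a, -, ha⟩ := hA x hx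
  obtain ⟨b, -, hb⟩ := hA _ hxd
  obtain ⟨c, hcn, hc⟩ := hA _ hx2d
  rw [abs_le] at ha hb hc
  have hab : a < b := ht.reflect_lt (by linarith)
  have hbc : b < c := ht.reflect_lt (by linarith)
  have hnear : |t a + t c - 2 * t b| ≤ 4 * δ := abs_le.2 ⟨by linarith, by linarith⟩
  linarith [hsep a b c hab hbc hcn]

lemma IsNowhereDense.exists_Icc_subset_disjoint {C U : Set ℝ} (hC : IsNowhereDense C)
    (hU : IsOpen U) (hne : U.Nonempty) : ∃ u v, u < v ∧ Icc u v ⊆ U ∧ Disjoint (Icc u v) C := by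
  obtain ⟨q, hqU, hqC⟩ : (U \ closure C).Nonempty := by
    refine nonempty_iff_ne_empty.2 fun h => hne.ne_empty ?_
    rw [← subset_empty_iff, ← hC]
    exact interior_maximal (sdiff_eq_empty.1 h) hU
  obtain ⟨r, hr, hball⟩ := Metric.isOpen_iff.1 (hU.sdiff isClosed_closure) q ⟨hqU, hqC⟩
  have hsub : Icc (q - r / 2) (q + r / 2) ⊆ U \ closure C :=
    (Icc_subset_Ioo (by linarith) (by linarith)).trans (Real.ball_eq_Ioo q r ▸ hball)
  refine ⟨q - r / 2, q + r / 2, by linarith, fun x hx => (hsub hx).1, ?_⟩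
  exact disjoint_left.2 fun x hx hxC => (hsub hx).2 (subset_closure hxC)

namespace Hplus

variable {f : C(Icc (0 : ℝ) 1, ℝ)}

lemma apply_mem_Icc (hf : f ∈ Hplus) (x : Icc (0 : ℝ) 1) : f x ∈ Icc 0 1 := by
  obtain ⟨hmono, h0, h1⟩ := hf
  exact ⟨h0.symm.trans_le (hmono.monotone x.2.1), (hmono.monotone x.2.2).trans_eq h1⟩

lemma comp_mem (hf : f ∈ Hplus) {H : C(ℝ, ℝ)} (hH : StrictMono H) (h0 : H 0 = 0)
    (h1 : H 1 = 1) : H.comp f ∈ Hplus :=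
  ⟨hH.comp hf.1, congrArg H hf.2.1 |>.trans h0, congrArg H hf.2.2 |>.trans h1⟩

lemma exists_Ioo_disjoint_imgC (hf : f ∈ Hplus) {C : Set ℝ} (hC : IsNowhereDense C) {α β : ℝ}
    (hα : 0 ≤ α) (hαβ : α < β) (hβ : β ≤ 1) :
    ∃ a b, α < a ∧ a < b ∧ b < β ∧ Disjoint (imgC f C) (Ioo a b) := by
  obtain ⟨hmono, h0, h1⟩ := hf
  set Φ := IccExtend zero_le_one f
  have hΦ : Continuous Φ := f.continuous.Icc_extend'
  set U := Ioo 0 1 ∩ Φ ⁻¹' Ioo α β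
  have hU : IsOpen U := isOpen_Ioo.inter (isOpen_Ioo.preimage hΦ)
  have hne : U.Nonempty := by
    have hmid : (α + β) / 2 ∈ Ioo (Φ 0) (Φ 1) := by
      rw [show Φ 0 = 0 from (IccExtend_left _ _).trans h0,
        show Φ 1 = 1 from (IccExtend_right _ _).trans h1]
      constructor <;> linarith
    obtain ⟨x, hx, hΦx⟩ := intermediate_value_Ioo zero_le_one hΦ.continuousOn hmid
    exact ⟨x, hx, by rw [mem_preimage, hΦx]; constructor <;> linarith⟩
  obtain ⟨u, v, huv, hsub, hdisj⟩ := hC.exists_Icc_subset_disjoint hU hne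
  obtain ⟨⟨hu0, hu1⟩, hΦu⟩ := hsub (left_mem_Icc.2 huv.le)
  obtain ⟨⟨hv0, hv1⟩, hΦv⟩ := hsub (right_mem_Icc.2 huv.le)
  set u' : Icc (0 : ℝ) 1 := ⟨u, hu0.le, hu1.le⟩
  set v' : Icc (0 : ℝ) 1 := ⟨v, hv0.le, hv1.le⟩
  have hΦu' : Φ u = f u' := IccExtend_of_mem _ _ _
  have hΦv' : Φ v = f v' := IccExtend_of_mem _ _ _
  refine ⟨f u', f v', hΦu' ▸ hΦu.1, hmono huv, hΦv' ▸ hΦv.2, disjoint_left.2 ?_⟩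
  rintro _ ⟨ξ, hξC, rfl⟩ ⟨hξu, hξv⟩
  exact disjoint_left.1 hdisj ⟨(hmono.lt_iff_lt.1 hξu).le, (hmono.lt_iff_lt.1 hξv).le⟩ hξC

lemma norm_comp_sub_le (hf : f ∈ Hplus) {H : C(ℝ, ℝ)} {s : ℝ} (hs : 0 ≤ s)
    (hH : ∀ y ∈ Icc (0 : ℝ) 1, |H y - y| ≤ s) : ‖H.comp f - f‖ ≤ s :=
  (ContinuousMap.norm_le _ hs).2 fun x => hH _ (apply_mem_Icc hf x)

end Hplus

section Blend

variable {δ : ℝ} {S : C(ℝ, ℝ)}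

def blend (δ : ℝ) (S : C(ℝ, ℝ)) : C(ℝ, ℝ) :=
  ⟨fun y => (1 - δ) * S y + δ * y, by fun_prop⟩

lemma strictMono_blend (hS : Monotone S) (hδ0 : 0 < δ) (hδ1 : δ ≤ 1) :
    StrictMono (blend δ S) := fun _ _ hxy =>
  add_lt_add_of_le_of_lt (mul_le_mul_of_nonneg_left (hS hxy.le) (by linarith))
    (mul_lt_mul_of_pos_left hxy hδ0)

lemma blend_apply_sub_self (y : ℝ) : blend δ S y - y = (1 - δ) * (S y - y) := by
  simp only [blend, ContinuousMap.coe_mk]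
  ring

lemma blend_apply_sub_apply (y : ℝ) : blend δ S y - S y = δ * (y - S y) := by
  simp only [blend, ContinuousMap.coe_mk]
  ring

end Blend

theorem exists_mem_Hplus_near_grid {C : Set ℝ} (hC : IsNowhereDense C)
    {f : C(Icc (0 : ℝ) 1, ℝ)} (hf : f ∈ Hplus) {n : ℕ} (hn : n ≠ 0) {t : ℕ → ℝ}
    (ht : StrictMono t) (ht0 : t 0 = 0) (htn : t n = 1) {s δ : ℝ}
    (hs : ∀ i < n, t (i + 1) - t i ≤ s) (hδ0 : 0 < δ) (hδ1 : δ ≤ 1) :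
    ∃ g ∈ Hplus, ‖g - f‖ ≤ s ∧ ∀ x ∈ imgC g C, ∃ j ≤ n, |x - t j| ≤ δ := by
  have hgap : ∀ i < n, ∃ a b, t i < a ∧ a < b ∧ b < t (i + 1) ∧ Disjoint (imgC f C) (Ioo a b) :=
    fun i hi => Hplus.exists_Ioo_disjoint_imgC hf hC (ht0 ▸ ht.monotone i.zero_le)
      (ht i.lt_succ_self) (htn ▸ ht.monotone hi)
  choose! a b hta hab hbt hdisj using hgap
  have hta' : ∀ i < n, t i ≤ a i := fun i hi => (hta i hi).le
  have hbt' : ∀ i < n, b i ≤ t (i + 1) := fun i hi => (hbt i hi).le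
  set S : C(ℝ, ℝ) := ⟨staircase n t a b, continuous_staircase n t a b⟩
  have hS0 : S 0 = 0 := ht0 ▸ staircase_first ht.monotone hta' hab
  have hS1 : S 1 = 1 := htn ▸ staircase_last ht.monotone hab hbt'
  have hH0 : blend δ S 0 = 0 := by simp [blend, hS0]
  have hH1 : blend δ S 1 = 1 := by simp [blend, hS1]
  have hH : StrictMono (blend δ S) :=
    strictMono_blend (monotone_staircase ht.monotone hab) hδ0 hδ1
  refine ⟨(blend δ S).comp f, Hplus.comp_mem hf hH hH0 hH1, ?_, ?_⟩
  · have hs0 : 0 ≤ s := (sub_pos.2 (ht zero_lt_one)).le.trans (hs 0 (Nat.pos_of_ne_zero hn))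
    refine Hplus.norm_comp_sub_le hf hs0 fun y hy => ?_
    rw [blend_apply_sub_self, abs_mul, abs_of_nonneg (by linarith : 0 ≤ 1 - δ)]
    exact (mul_le_of_le_one_left (abs_nonneg _) (by linarith)).trans
      (abs_staircase_sub_le ht.monotone hta' hab hbt' hn hs (by rwa [ht0, htn]))
  · rintro _ ⟨ξ, hξC, rfl⟩
    have hy := Hplus.apply_mem_Icc hf ξ
    have hgap : ∀ i < n, f ξ ∉ Ioo (a i) (b i) :=
      fun i hi => disjoint_left.1 (hdisj i hi) ⟨ξ, hξC, rfl⟩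
    obtain ⟨j, hj, hSj⟩ :=
      exists_staircase_eq ht.monotone hta' hab hbt' hn (by rwa [ht0, htn]) hgap
    have htj : t j ∈ Icc 0 1 := ⟨ht0 ▸ ht.monotone j.zero_le, htn ▸ ht.monotone hj⟩
    have hdist : |f ξ - S (f ξ)| ≤ 1 := by
      rw [show S (f ξ) = t j from hSj, abs_le]
      constructor <;> linarith [hy.1, hy.2, htj.1, htj.2]
    refine ⟨j, hj, ?_⟩
    rw [ContinuousMap.comp_apply, ← show S (f ξ) = t j from hSj, blend_apply_sub_apply, abs_mul,
      abs_of_pos hδ0]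
    exact mul_le_of_le_one_right hδ0.le hdist

theorem exists_close_map_no_large_step_AP_general (C : Set ℝ)
    (hnd : IsNowhereDense C) (f : C(Set.Icc (0:ℝ) 1, ℝ)) (hf : f ∈ Hplus)
    (ε : ℝ) (hε : 0 < ε) :
    ∃ g ∈ Hplus, ‖g - f‖ < ε ∧
      ¬ ∃ x d : ℝ, ε ≤ d ∧ x ∈ imgC g C ∧ x + d ∈ imgC g C ∧ x + 2 * d ∈ imgC g C := by
  obtain ⟨n, hεn⟩ := exists_nat_gt (2 / ε)
  have hn0 : (0 : ℝ) < n := (div_pos two_pos hε).trans hεn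
  have hn : n ≠ 0 := by exact_mod_cast hn0.ne'
  have hnε : 2 / (n : ℝ) < ε := (div_lt_comm₀ hε hn0).1 hεn
  have hn1 : (1 : ℝ) ≤ n := by exact_mod_cast Nat.one_le_iff_ne_zero.2 hn
  set δ : ℝ := 1 / (32 * n ^ 3)
  have hδ0 : 0 < δ := by positivity
  have hδn : δ ≤ 1 / n := by
    rw [div_le_div_iff₀ (by positivity) hn0]
    nlinarith [pow_le_pow_right₀ hn1 (show 1 ≤ 3 by norm_num)]
  have hδsep : 4 * δ < 1 / (4 * n ^ 3) := by
    rw [show 4 * δ = 1 / (8 * n ^ 3) by ring]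
    exact one_div_lt_one_div_of_lt (by positivity) (by linarith [pow_pos hn0 3])
  have hgrid := strictMono_apFreeGrid hn
  obtain ⟨g, hg, hgf, hgC⟩ := exists_mem_Hplus_near_grid hnd hf hn hgrid apFreeGrid_zero
    (apFreeGrid_self hn) (fun i => apFreeGrid_succ_sub_le) hδ0
    (hδn.trans (div_le_one_of_le₀ hn1 hn0.le))
  refine ⟨g, hg, hgf.trans_lt hnε, not_exists_AP_of_near_grid hgrid.monotone
    (fun a b c hab hbc hcn => hδsep.trans_le (one_div_le_abs_apFreeGrid_second_diff hab hbc hcn))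
    ?_ hgC⟩
  calc 2 * δ ≤ 2 * (1 / n) := by gcongr
    _ = 2 / n := mul_one_div 2 _
    _ < ε := hnε

/-- For nowhere dense `C ⊆ [0,1]`, `f ∈ H⁺` and `ε > 0`, there is `g ∈ H⁺` with
`‖g - f‖ < ε` such that `g(C)` has no 3-term AP of step `d ≥ ε`. -/
theorem exists_close_map_no_large_step_AP (C : Set ℝ) (hC : C ⊆ Set.Icc 0 1)
    (hnd : IsNowhereDense C) (f : C(Set.Icc (0:ℝ) 1, ℝ)) (hf : f ∈ Hplus)
    (ε : ℝ) (hε : 0 < ε) :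
    ∃ g ∈ Hplus, ‖g - f‖ < ε ∧
      ¬ ∃ x d : ℝ, ε ≤ d ∧ x ∈ imgC g C ∧ x + d ∈ imgC g C ∧ x + 2 * d ∈ imgC g C :=
  exists_close_map_no_large_step_AP_general C hnd f hf ε hε
end
end
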